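/- arXiv:1903.03311 — 3 statements merged into one kernel-verified Lean document; each statement's English description precedes it below -/
import Mathlib

section
/- If a monochromatic graph G contains a spanning complete bipartite subgraph H such that each partite set of H contains an edge of G, then pc_opt(G) ≤ 3. -/
open SimpleGraph

/-- A walk is properly colored: no two consecutive edges share a color. -/
def ProperWalk {V : Type*} {G : SimpleGraph V} (c : Sym2 V → ℕ) {u v : V} (p : G.Walk u v) : Prop :=
  (p.edges.map c).Chain' (· ≠ ·)

/-- An edge-colored graph is properly connected. -/
def ProperlyConnected {V : Type*} (G : SimpleGraph V) (c : Sym2 V → ℕ) : Prop :=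
  ∀ u v : V, u ≠ v → ∃ p : G.Walk u v, p.IsPath ∧ ProperWalk c p

/-- Number of edges recolored away from the base color 0. -/
noncomputable def numRecolored {V : Type*} (G : SimpleGraph V) (c : Sym2 V → ℕ) : ℕ :=
  {e | e ∈ G.edgeSet ∧ c e ≠ 0}.ncard

/-- Number of new colors used. -/
noncomputable def numNewColors {V : Type*} (G : SimpleGraph V) (c : Sym2 V → ℕ) : ℕ :=
  (c '' {e | e ∈ G.edgeSet ∧ c e ≠ 0}).ncard

/-- Optimal proper connection number: minimum of p + q. -/
noncomputable def pcOpt {V : Type*} (G : SimpleGraph V) : ℕ :=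
  sInf { n | ∃ c : Sym2 V → ℕ, ProperlyConnected G c ∧
    n = numRecolored G c + numNewColors G c }

/-!
Recolor with a single new color one edge inside each part. Vertices in different parts are
adjacent; two vertices of one part are joined through the recolored edge of the other part, by a
path colored `0, 1, 0`. This recolors two edges with one new color.
-/

section

variable {V : Type*} {G : SimpleGraph V}

theorem pcOpt_le_of_properlyConnected {c : Sym2 V → ℕ} (hc : ProperlyConnected G c) :
    pcOpt G ≤ numRecolored G c + numNewColors G c :=
  Nat.sInf_le ⟨c, hc, rfl⟩

theorem numRecolored_indicator {S : Set (Sym2 V)} (hS : S ⊆ G.edgeSet) :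
    numRecolored G (S.indicator 1) = S.ncard := by
  rw [numRecolored]
  congr 1
  ext e
  by_cases he : e ∈ S
  · simp [he, hS he]
  · simp [he]

theorem numNewColors_indicator_le_one (S : Set (Sym2 V)) :
    numNewColors G (S.indicator 1) ≤ 1 := by
  refine (Set.ncard_le_ncard ?_ (Set.finite_singleton 1)).trans_eq (Set.ncard_singleton 1)
  rintro _ ⟨e, ⟨-, he⟩, rfl⟩
  by_cases heS : e ∈ S <;> simp_all

theorem pcOpt_le_ncard_add_one {S : Set (Sym2 V)} (hS : S ⊆ G.edgeSet)
    (hc : ProperlyConnected G (S.indicator 1)) : pcOpt G ≤ S.ncard + 1 :=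
  calc pcOpt G ≤ numRecolored G (S.indicator 1) + numNewColors G (S.indicator 1) :=
        pcOpt_le_of_properlyConnected hc
    _ ≤ S.ncard + 1 := by
        rw [numRecolored_indicator hS]
        exact Nat.add_le_add_left (numNewColors_indicator_le_one S) _

theorem properWalk_toWalk (c : Sym2 V → ℕ) {u v : V} (h : G.Adj u v) :
    ProperWalk c h.toWalk :=
  List.isChain_singleton _

theorem properWalk_cons_cons_cons (c : Sym2 V → ℕ) {u x y v : V} (h₁ : G.Adj u x)
    (h₂ : G.Adj x y) (h₃ : G.Adj y v) (hc₁ : c s(u, x) ≠ c s(x, y))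
    (hc₂ : c s(x, y) ≠ c s(y, v)) :
    ProperWalk c (.cons h₁ (.cons h₂ (.cons h₃ .nil))) :=
  .cons_cons hc₁ (List.isChain_pair.2 hc₂)

theorem mem_and_mem_of_sym2_mk_eq {A : Set V} {a b x y : V} (h : s(a, b) = s(x, y))
    (hx : x ∈ A) (hy : y ∈ A) : a ∈ A ∧ b ∈ A := by
  have hxy : ∀ z ∈ s(x, y), z ∈ A := by simp [hx, hy]
  rw [← h] at hxy
  exact ⟨hxy a (Sym2.mem_mk_left a b), hxy b (Sym2.mem_mk_right a b)⟩

variable {A : Set V} {c : Sym2 V → ℕ}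

theorem exists_isPath_properWalk_of_mem (hbip : ∀ a ∈ A, ∀ b ∉ A, G.Adj a b)
    (hcross : ∀ a ∈ A, ∀ b ∉ A, c s(a, b) = 0) {x y : V} (hx : x ∉ A) (hy : y ∉ A)
    (hxy : G.Adj x y) (hc : c s(x, y) ≠ 0) {u v : V} (hu : u ∈ A) (hv : v ∈ A) (huv : u ≠ v) :
    ∃ p : G.Walk u v, p.IsPath ∧ ProperWalk c p := by
  refine ⟨.cons (hbip u hu x hx) (.cons hxy (.cons (hbip v hv y hy).symm .nil)), ?_,
    properWalk_cons_cons_cons c _ _ _ ?_ ?_⟩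
  · simp [Walk.cons_isPath_iff, huv, hxy.ne, ne_of_mem_of_not_mem hu hx,
      ne_of_mem_of_not_mem hu hy, (ne_of_mem_of_not_mem hv hx).symm,
      (ne_of_mem_of_not_mem hv hy).symm]
  · rw [hcross u hu x hx]
    exact hc.symm
  · rw [Sym2.eq_swap (a := y), hcross v hv y hy]
    exact hc

theorem properlyConnected_of_forall_adj (hbip : ∀ a ∈ A, ∀ b ∉ A, G.Adj a b)
    (hcross : ∀ a ∈ A, ∀ b ∉ A, c s(a, b) = 0)
    {x₁ y₁ : V} (hx₁ : x₁ ∈ A) (hy₁ : y₁ ∈ A) (h₁ : G.Adj x₁ y₁) (hc₁ : c s(x₁, y₁) ≠ 0)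
    {x₂ y₂ : V} (hx₂ : x₂ ∉ A) (hy₂ : y₂ ∉ A) (h₂ : G.Adj x₂ y₂) (hc₂ : c s(x₂, y₂) ≠ 0) :
    ProperlyConnected G c := by
  have hbip' : ∀ a ∈ Aᶜ, ∀ b ∉ Aᶜ, G.Adj a b := fun a ha b hb =>
    (hbip b (not_not.1 hb) a ha).symm
  have hcross' : ∀ a ∈ Aᶜ, ∀ b ∉ Aᶜ, c s(a, b) = 0 := fun a ha b hb => by
    rw [Sym2.eq_swap]
    exact hcross b (not_not.1 hb) a ha
  intro u v huv
  by_cases hu : u ∈ A <;> by_cases hv : v ∈ A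
  · exact exists_isPath_properWalk_of_mem hbip hcross hx₂ hy₂ h₂ hc₂ hu hv huv
  · exact ⟨_, (hbip u hu v hv).isPath_toWalk, properWalk_toWalk c _⟩
  · exact ⟨_, (hbip v hv u hu).symm.isPath_toWalk, properWalk_toWalk c _⟩
  · exact exists_isPath_properWalk_of_mem hbip' hcross' (not_not.2 hx₁) (not_not.2 hy₁) h₁ hc₁
      hu hv huv

end

theorem stmt6_general {V : Type*} (G : SimpleGraph V)
    (A₁ A₂ : Set V) (hdisj : Disjoint A₁ A₂) (hun : A₁ ∪ A₂ = Set.univ)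
    (hbip : ∀ a ∈ A₁, ∀ b ∈ A₂, G.Adj a b)
    (he₁ : ∃ a ∈ A₁, ∃ b ∈ A₁, G.Adj a b)
    (he₂ : ∃ a ∈ A₂, ∃ b ∈ A₂, G.Adj a b) :
    pcOpt G ≤ 3 := by
  obtain rfl : A₁ᶜ = A₂ := IsCompl.compl_eq ⟨hdisj, codisjoint_iff.2 hun⟩
  obtain ⟨x₁, hx₁, y₁, hy₁, h₁⟩ := he₁
  obtain ⟨x₂, hx₂, y₂, hy₂, h₂⟩ := he₂
  set S : Set (Sym2 V) := {s(x₁, y₁), s(x₂, y₂)}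
  have hS : S ⊆ G.edgeSet := Set.insert_subset_iff.2 ⟨h₁, Set.singleton_subset_iff.2 h₂⟩
  have hcross : ∀ a ∈ A₁, ∀ b ∉ A₁, S.indicator 1 s(a, b) = 0 := by
    rintro a ha b hb
    refine Set.indicator_of_notMem ?_ _
    rintro (h | h)
    · exact hb (mem_and_mem_of_sym2_mk_eq h hx₁ hy₁).2
    · exact (mem_and_mem_of_sym2_mk_eq h hx₂ hy₂).1 ha
  have hpc : ProperlyConnected G (S.indicator 1) :=
    properlyConnected_of_forall_adj hbip hcross hx₁ hy₁ h₁ (by simp [S]) hx₂ hy₂ h₂ (by simp [S])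
  calc pcOpt G ≤ S.ncard + 1 := pcOpt_le_ncard_add_one hS hpc
    _ ≤ 2 + 1 := by
      gcongr
      exact (Set.ncard_insert_le _ _).trans_eq (by rw [Set.ncard_singleton])

theorem stmt6 {V : Type*} [Fintype V] (G : SimpleGraph V) (hconn : G.Connected)
    (A₁ A₂ : Set V) (hdisj : Disjoint A₁ A₂) (hun : A₁ ∪ A₂ = Set.univ)
    (hbip : ∀ a ∈ A₁, ∀ b ∈ A₂, G.Adj a b)
    (he₁ : ∃ a ∈ A₁, ∃ b ∈ A₁, G.Adj a b)
    (he₂ : ∃ a ∈ A₂, ∃ b ∈ A₂, G.Adj a b) :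
    pcOpt G ≤ 3 :=
  stmt6_general G A₁ A₂ hdisj hun hbip he₁ he₂
end

section
/- For the monochromatic complete bipartite graph K_{m,n} with m ≥ n ≥ 2 and m + n ≥ 9: pc_opt(K_{m,n}) = 4 if n ∈ {2,3}, and pc_opt(K_{m,n}) = 5 if n ≥ 4. -/
open SimpleGraph

/-!
If only one new colour `a` is used, the colours along a properly coloured path alternate
`0, a, 0, …`, so a path between two vertices all of whose edges keep colour `0` has odd length;
two such vertices on the same side exist once fewer than `m - 1` edges are recoloured, and they
would need an even path. If only two edges are recoloured, a properly coloured path between two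
such vertices on the same side is coloured `0, a, b, 0`, so the two recoloured edges meet in a
vertex of that side; with at least four vertices on each side this happens on both sides, which
two distinct edges cannot do. Conversely, colouring `l₀r₀, l₀r₁` with `1, 2` (and, for `n ≥ 4`,
also `l₁r₀` with `2`) joins every pair on one side through these edges.
-/

namespace List

variable {α : Type*}

theorem IsChain.odd_length_of_forall_mem_pair {a b : α} :
    ∀ {L : List α}, L.IsChain (· ≠ ·) → (∀ x ∈ L, x = a ∨ x = b) →
      L.head? = some a → L.getLast? = some a → Odd L.length
  | [], _, _, hh, _ => by simp at hh
  | [_], _, _, _, _ => by simp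
  | [_, _], hc, _, hh, hl => by simp_all
  | x :: y :: z :: t, hc, hm, hh, hl => by
    obtain ⟨hxy, hyz, hc⟩ : x ≠ y ∧ y ≠ z ∧ (z :: t).IsChain (· ≠ ·) := by
      simpa only [isChain_cons_cons] using hc
    have hx : x = a := by simpa using hh
    have hy : y = b := (hm y (by simp)).resolve_left (hx ▸ hxy.symm)
    have hz : z = a := (hm z (by simp)).resolve_right (hy ▸ hyz.symm)
    have ih := hc.odd_length_of_forall_mem_pair (fun w hw ↦ hm w (by simp [hw])) (by simp [hz])
      (by simpa using hl)
    simpa [Nat.odd_add_one, parity_simps] using ih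

theorem IsChain.length_le_two_mul_countP_ne_add_one [DecidableEq α] (b : α) :
    ∀ {L : List α}, L.IsChain (· ≠ ·) → L.length ≤ 2 * L.countP (· ≠ b) + 1
  | [], _ => by simp
  | [_], _ => by simp
  | x :: y :: t, hc => by
    have ih := hc.tail.tail.length_le_two_mul_countP_ne_add_one b
    have hxy : x ≠ y := (isChain_cons_cons.mp hc).1
    simp only [length_cons, countP_cons]
    by_cases hx : x = b <;> by_cases hy : y = b <;> simp_all <;> omega

end List

theorem Set.exists_ne_notMem_image_of_ncard_add_two_le {γ α : Type*} [Finite γ] [Finite α]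
    (f : γ → α) (P : Set γ) (h : P.ncard + 2 ≤ Nat.card α) :
    ∃ u v, u ≠ v ∧ u ∉ f '' P ∧ v ∉ f '' P := by
  have hcompl : 1 < (f '' P)ᶜ.ncard := by
    have := Set.ncard_add_ncard_compl (f '' P)
    have := Set.ncard_image_le (f := f) (Set.toFinite P)
    omega
  obtain ⟨u, hu, v, hv, huv⟩ := (Set.one_lt_ncard (Set.toFinite _)).1 hcompl
  exact ⟨u, v, huv, hu, hv⟩

namespace SimpleGraph

section

variable {V : Type*} {G : SimpleGraph V} (c : Sym2 V → ℕ)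

theorem properWalk_iff {u v : V} (p : G.Walk u v) :
    ProperWalk c p ↔ (p.edges.map c).IsChain (· ≠ ·) :=
  Iff.rfl

theorem Walk.head?_map_edges_eq_some_zero {u v : V} (w : G.Walk u v) (huv : u ≠ v)
    (hu : ∀ x, G.Adj u x → c s(u, x) = 0) : (w.edges.map c).head? = some 0 := by
  cases w with
  | nil => exact absurd rfl huv
  | cons h p => simp [hu _ h]

theorem Walk.getLast?_map_edges_eq_some_zero {u v : V} (w : G.Walk u v) (huv : u ≠ v)
    (hv : ∀ x, G.Adj v x → c s(v, x) = 0) : (w.edges.map c).getLast? = some 0 := by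
  simpa using w.reverse.head?_map_edges_eq_some_zero c huv.symm hv

theorem exists_properPath_of_adj {u v : V} (h : G.Adj u v) :
    ∃ p : G.Walk u v, p.IsPath ∧ ProperWalk c p :=
  ⟨h.toWalk, by simp [h.ne], by simp [properWalk_iff]⟩

theorem exists_properPath_of_adj_of_adj {u x v : V} (hux : G.Adj u x) (hxv : G.Adj x v)
    (huv : u ≠ v) (hc : c s(u, x) ≠ c s(x, v)) :
    ∃ p : G.Walk u v, p.IsPath ∧ ProperWalk c p :=
  ⟨.cons hux (.cons hxv .nil), by simp [hux.ne, hxv.ne, huv], by simp [properWalk_iff, hc]⟩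

/-- The path is `u s₁ h s₂ v`, or `h s₁ v` and `u s₁ h` when `u` or `v` is the hub. -/
theorem exists_properPath_through_hub {h s₁ s₂ u v : V} (hs : s₁ ≠ s₂)
    (hh : h ∈ G.commonNeighbors s₁ s₂) (hu : u ∈ G.commonNeighbors s₁ s₂)
    (hv : v ∈ G.commonNeighbors s₁ s₂) (huv : u ≠ v) (hc : c s(h, s₁) ≠ c s(h, s₂))
    (hc₁ : ∀ x ∈ G.commonNeighbors s₁ s₂, x ≠ h → c s(x, s₁) ≠ c s(h, s₁))
    (hc₂ : ∀ x ∈ G.commonNeighbors s₁ s₂, x ≠ h → c s(x, s₂) ≠ c s(h, s₂)) :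
    ∃ p : G.Walk u v, p.IsPath ∧ ProperWalk c p := by
  obtain ⟨hh₁, hh₂⟩ := (G.mem_commonNeighbors).1 hh
  obtain ⟨hu₁, hu₂⟩ := (G.mem_commonNeighbors).1 hu
  obtain ⟨hv₁, hv₂⟩ := (G.mem_commonNeighbors).1 hv
  by_cases huh : u = h
  · subst huh
    refine exists_properPath_of_adj_of_adj c hh₁.symm hv₁ huv ?_
    rw [Sym2.eq_swap (a := s₁)]
    exact (hc₁ v hv (Ne.symm huv)).symm
  by_cases hvh : v = h
  · subst hvh
    refine exists_properPath_of_adj_of_adj c hu₁.symm hh₁ huv ?_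
    rw [Sym2.eq_swap (a := s₁)]
    exact hc₁ u hu huh
  refine ⟨.cons hu₁.symm (.cons hh₁ (.cons hh₂.symm (.cons hv₂ .nil))), ?_, ?_⟩
  · simp [huv, huh, Ne.symm hvh, hs, hu₁.ne', hu₂.ne', hv₁.ne, hv₂.ne, hh₁.ne, hh₂.ne']
  · simp only [properWalk_iff, Walk.edges_cons, Walk.edges_nil, List.map_cons, List.map_nil,
      List.isChain_cons_cons, List.isChain_singleton, and_true]
    rw [Sym2.eq_swap (a := s₁) (b := h), Sym2.eq_swap (a := s₂) (b := v)]
    exact ⟨hc₁ u hu huh, hc, (hc₂ v hv hvh).symm⟩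

end

section

variable {V : Type*} {G : SimpleGraph V} {c : Sym2 V → ℕ}

theorem pcOpt_eq_of_forall_le {k : ℕ} (hc : ProperlyConnected G c)
    (hk : numRecolored G c + numNewColors G c = k)
    (hle : ∀ c', ProperlyConnected G c' → k ≤ numRecolored G c' + numNewColors G c') :
    pcOpt G = k :=
  le_antisymm (Nat.sInf_le ⟨c, hc, hk.symm⟩)
    (le_csInf ⟨k, c, hc, hk.symm⟩ fun _ ⟨c', hc', hk'⟩ ↦ hk' ▸ hle c' hc')

variable [Finite V]

theorem numNewColors_le_numRecolored : numNewColors G c ≤ numRecolored G c :=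
  Set.ncard_image_le (Set.toFinite _)

theorem numNewColors_pos (h : 0 < numRecolored G c) : 0 < numNewColors G c := by
  obtain ⟨e, he⟩ := (Set.ncard_pos (Set.toFinite _)).1 h
  exact (Set.ncard_pos (Set.toFinite _)).2 ⟨c e, e, he, rfl⟩

theorem exists_forall_eq_zero_or_eq_of_numNewColors_le_one (h : numNewColors G c ≤ 1) :
    ∃ a, ∀ e ∈ G.edgeSet, c e = 0 ∨ c e = a := by
  by_cases hR : ∃ e ∈ G.edgeSet, c e ≠ 0
  · obtain ⟨e₀, he₀, hc₀⟩ := hR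
    refine ⟨c e₀, fun e he ↦ or_iff_not_imp_left.2 fun hc ↦ ?_⟩
    exact (Set.ncard_le_one (Set.toFinite _)).1 h _ ⟨e, ⟨he, hc⟩, rfl⟩ _ ⟨e₀, ⟨he₀, hc₀⟩, rfl⟩
  · push Not at hR
    exact ⟨0, fun e he ↦ .inl (hR e he)⟩

theorem countP_edges_le_numRecolored {u v : V} {w : G.Walk u v} (hw : w.IsPath) :
    w.edges.countP (c · ≠ 0) ≤ numRecolored G c := by
  classical
  rw [List.countP_eq_length_filter, ← List.toFinset_card_of_nodup (hw.edges_nodup.filter _),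
    ← Set.ncard_coe_finset]
  refine Set.ncard_le_ncard (fun e he ↦ ?_) (Set.toFinite _)
  simp only [Finset.mem_coe, List.mem_toFinset, List.mem_filter, decide_eq_true_eq] at he
  exact ⟨w.edges_subset_edgeSet he.1, he.2⟩

end

end SimpleGraph

namespace ProperWalk

variable {V : Type*} {G : SimpleGraph V} {c : Sym2 V → ℕ}

/-- With a single new colour `a` the colours of a proper walk alternate `0, a, 0, …`. -/
theorem odd_length {u v : V} {w : G.Walk u v} (hw : ProperWalk c w) (huv : u ≠ v)
    (hu : ∀ x, G.Adj u x → c s(u, x) = 0) (hv : ∀ x, G.Adj v x → c s(v, x) = 0) {a : ℕ}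
    (ha : ∀ e ∈ w.edges, c e = 0 ∨ c e = a) : Odd w.length := by
  simpa using ((properWalk_iff c w).1 hw).odd_length_of_forall_mem_pair (by simpa using ha)
    (w.head?_map_edges_eq_some_zero c huv hu) (w.getLast?_map_edges_eq_some_zero c huv hv)

/-- A proper colour sequence has no two consecutive zeros, so with at most two nonzero entries
it has length at most `5`; being even and starting and ending with `0`, it is `0, a, b, 0`. -/
theorem exists_consecutive_recolored {u v : V} {w : G.Walk u v} (hw : ProperWalk c w)
    (huv : u ≠ v) (hu : ∀ x, G.Adj u x → c s(u, x) = 0) (hv : ∀ x, G.Adj v x → c s(v, x) = 0)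
    (heven : Even w.length) (hR : w.edges.countP (c · ≠ 0) ≤ 2) :
    ∃ x₁ x₂ x₃, G.Adj u x₁ ∧ G.Adj x₁ x₂ ∧ G.Adj x₂ x₃ ∧
      c s(x₁, x₂) ≠ 0 ∧ c s(x₂, x₃) ≠ 0 ∧ c s(x₁, x₂) ≠ c s(x₂, x₃) := by
  have hlen : w.length ≤ 5 := by
    have := ((properWalk_iff c w).1 hw).length_le_two_mul_countP_ne_add_one 0
    rw [List.length_map, Walk.length_edges, List.countP_map] at this
    have hR' : (w.edges.countP ((· ≠ 0) ∘ c)) ≤ 2 := hR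
    omega
  rw [properWalk_iff] at hw
  rcases w with _ | ⟨h₁, _ | ⟨h₂, _ | ⟨h₃, _ | ⟨h₄, _ | ⟨h₅, w⟩⟩⟩⟩⟩
  · exact absurd rfl huv
  · simp at heven
  · simp [hu _ h₁, Sym2.eq_swap (b := v), hv _ h₂.symm] at hw
  · simp [Nat.even_add_one] at heven
  · rename_i x₁ x₂ x₃
    simp only [Walk.edges_cons, Walk.edges_nil, List.map_cons, List.map_nil,
      List.isChain_cons_cons, List.isChain_singleton, and_true] at hw
    obtain ⟨h₁₂, h₂₃, h₃₄⟩ := hw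
    rw [hu _ h₁] at h₁₂
    rw [Sym2.eq_swap (b := v), hv _ h₄.symm] at h₃₄
    exact ⟨x₁, x₂, x₃, h₁, h₂, h₃, h₁₂.symm, h₃₄, h₂₃⟩
  · simp only [Walk.length_cons] at hlen heven
    rw [Nat.even_iff] at heven
    omega

end ProperWalk

namespace SimpleGraph

section

variable {α β : Type*} {c : Sym2 (α ⊕ β) → ℕ}

def recoloredPairs (c : Sym2 (α ⊕ β) → ℕ) : Set (α × β) :=
  {p | c s(.inl p.1, .inr p.2) ≠ 0}

theorem recoloredEdges_completeBipartiteGraph :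
    {e | e ∈ (completeBipartiteGraph α β).edgeSet ∧ c e ≠ 0} =
      (fun p : α × β ↦ s(.inl p.1, .inr p.2)) '' recoloredPairs c := by
  ext e
  rw [edgeSet_completeBipartiteGraph]
  constructor
  · rintro ⟨⟨p, rfl⟩, he⟩
    exact ⟨p, he, rfl⟩
  · rintro ⟨p, hp, rfl⟩
    exact ⟨⟨p, rfl⟩, hp⟩

theorem injective_sym2_inl_inr :
    Function.Injective fun p : α × β ↦ (s(.inl p.1, .inr p.2) : Sym2 (α ⊕ β)) := by
  rintro ⟨i, j⟩ ⟨i', j'⟩ h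
  simpa [Sym2.eq_iff] using h

theorem numRecolored_completeBipartiteGraph :
    numRecolored (completeBipartiteGraph α β) c = (recoloredPairs c).ncard := by
  rw [numRecolored, recoloredEdges_completeBipartiteGraph,
    Set.ncard_image_of_injective _ injective_sym2_inl_inr]

theorem numNewColors_completeBipartiteGraph :
    numNewColors (completeBipartiteGraph α β) c =
      ((fun p : α × β ↦ c s(.inl p.1, .inr p.2)) '' recoloredPairs c).ncard := by
  rw [numNewColors, recoloredEdges_completeBipartiteGraph, Set.image_image]

theorem even_length_of_walk_inl_inl {i i' : α}
    (w : (completeBipartiteGraph α β).Walk (.inl i) (.inl i')) : Even w.length :=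
  ((CompleteBipartiteGraph.bicoloring α β).even_length_iff_congr w).2 Iff.rfl

theorem even_length_of_walk_inr_inr {j j' : β}
    (w : (completeBipartiteGraph α β).Walk (.inr j) (.inr j')) : Even w.length :=
  ((CompleteBipartiteGraph.bicoloring α β).even_length_iff_congr w).2 Iff.rfl

theorem color_inl_eq_zero {i : α} (hi : i ∉ Prod.fst '' recoloredPairs c) :
    ∀ x, (completeBipartiteGraph α β).Adj (.inl i) x → c s(.inl i, x) = 0 := by
  rintro (i' | j) h
  · simp at h
  · by_contra hne
    exact hi ⟨(i, j), hne, rfl⟩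

theorem color_inr_eq_zero {j : β} (hj : j ∉ Prod.snd '' recoloredPairs c) :
    ∀ x, (completeBipartiteGraph α β).Adj (.inr j) x → c s(.inr j, x) = 0 := by
  rintro (i | j') h
  · rw [Sym2.eq_swap]
    by_contra hne
    exact hj ⟨(i, j), hne, rfl⟩
  · simp at h

end

section

variable {α β : Type*} [Finite α] [Finite β] {c : Sym2 (α ⊕ β) → ℕ}

theorem card_le_numRecolored_add_one (hc : ProperlyConnected (completeBipartiteGraph α β) c)
    (hq : numNewColors (completeBipartiteGraph α β) c ≤ 1) :
    Nat.card α ≤ numRecolored (completeBipartiteGraph α β) c + 1 := by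
  obtain ⟨a, ha⟩ := exists_forall_eq_zero_or_eq_of_numNewColors_le_one hq
  by_contra! h
  rw [numRecolored_completeBipartiteGraph] at h
  obtain ⟨u, v, huv, hu, hv⟩ :=
    Set.exists_ne_notMem_image_of_ncard_add_two_le Prod.fst (recoloredPairs c) (by omega)
  have huv' : (.inl u : α ⊕ β) ≠ .inl v := Sum.inl_injective.ne huv
  obtain ⟨w, -, hw⟩ := hc _ _ huv'
  have hodd := hw.odd_length huv' (color_inl_eq_zero hu) (color_inl_eq_zero hv)
    fun e he ↦ ha e (w.edges_subset_edgeSet he)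
  exact Nat.not_odd_iff_even.2 (even_length_of_walk_inl_inl w) hodd

theorem exists_recoloredPairs_of_ne_fst (hc : ProperlyConnected (completeBipartiteGraph α β) c)
    (hp : (recoloredPairs c).ncard ≤ 2) {u v : α} (huv : u ≠ v)
    (hu : u ∉ Prod.fst '' recoloredPairs c) (hv : v ∉ Prod.fst '' recoloredPairs c) :
    ∃ i j j', j ≠ j' ∧ (i, j) ∈ recoloredPairs c ∧ (i, j') ∈ recoloredPairs c := by
  have huv' : (.inl u : α ⊕ β) ≠ .inl v := Sum.inl_injective.ne huv
  obtain ⟨w, hwp, hw⟩ := hc _ _ huv'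
  obtain ⟨x₁, x₂, x₃, h₁, h₂, h₃, hc₁, hc₂, hc₁₂⟩ := hw.exists_consecutive_recolored huv'
    (color_inl_eq_zero hu) (color_inl_eq_zero hv) (even_length_of_walk_inl_inl w)
    ((countP_edges_le_numRecolored hwp).trans (numRecolored_completeBipartiteGraph ▸ hp))
  rcases x₁ with _ | j <;> rcases x₂ with i | _ <;> rcases x₃ with _ | j' <;> simp at h₁ h₂ h₃
  rw [Sym2.eq_swap] at hc₁ hc₁₂
  exact ⟨i, j, j', by rintro rfl; exact hc₁₂ rfl, hc₁, hc₂⟩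

theorem exists_recoloredPairs_of_ne_snd (hc : ProperlyConnected (completeBipartiteGraph α β) c)
    (hp : (recoloredPairs c).ncard ≤ 2) {u v : β} (huv : u ≠ v)
    (hu : u ∉ Prod.snd '' recoloredPairs c) (hv : v ∉ Prod.snd '' recoloredPairs c) :
    ∃ i i' j, i ≠ i' ∧ (i, j) ∈ recoloredPairs c ∧ (i', j) ∈ recoloredPairs c := by
  have huv' : (.inr u : α ⊕ β) ≠ .inr v := Sum.inr_injective.ne huv
  obtain ⟨w, hwp, hw⟩ := hc _ _ huv'
  obtain ⟨x₁, x₂, x₃, h₁, h₂, h₃, hc₁, hc₂, hc₁₂⟩ := hw.exists_consecutive_recolored huv'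
    (color_inr_eq_zero hu) (color_inr_eq_zero hv) (even_length_of_walk_inr_inr w)
    ((countP_edges_le_numRecolored hwp).trans (numRecolored_completeBipartiteGraph ▸ hp))
  rcases x₁ with i | _ <;> rcases x₂ with _ | j <;> rcases x₃ with i' | _ <;> simp at h₁ h₂ h₃
  rw [Sym2.eq_swap] at hc₂ hc₁₂
  exact ⟨i, i', j, by rintro rfl; exact hc₁₂ rfl, hc₁, hc₂⟩

/-- Two recoloured edges cannot meet both in a left and in a right vertex. -/
theorem three_le_numRecolored (hc : ProperlyConnected (completeBipartiteGraph α β) c)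
    (hα : 4 ≤ Nat.card α) (hβ : 4 ≤ Nat.card β) :
    3 ≤ numRecolored (completeBipartiteGraph α β) c := by
  by_contra! h
  rw [numRecolored_completeBipartiteGraph] at h
  obtain ⟨u, v, huv, hu, hv⟩ :=
    Set.exists_ne_notMem_image_of_ncard_add_two_le Prod.fst (recoloredPairs c) (by omega)
  obtain ⟨x, y, hxy, hx, hy⟩ :=
    Set.exists_ne_notMem_image_of_ncard_add_two_le Prod.snd (recoloredPairs c) (by omega)
  obtain ⟨i, j, j', hj, hij, hij'⟩ := exists_recoloredPairs_of_ne_fst hc (by omega) huv hu hv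
  obtain ⟨i₁, i₂, j₀, hi, hi₁, hi₂⟩ := exists_recoloredPairs_of_ne_snd hc (by omega) hxy hx hy
  have hP : {(i, j), (i, j')} = recoloredPairs c :=
    Set.eq_of_subset_of_ncard_le (Set.insert_subset hij (by simpa using hij'))
      (by rw [Set.ncard_pair (by simpa using hj)]; omega) (Set.toFinite _)
  rw [← hP] at hi₁ hi₂
  simp only [Set.mem_insert_iff, Set.mem_singleton_iff, Prod.mk.injEq] at hi₁ hi₂
  have h₁ : i₁ = i := by rcases hi₁ with h | h <;> exact h.1
  have h₂ : i₂ = i := by rcases hi₂ with h | h <;> exact h.1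
  exact hi (h₁.trans h₂.symm)

theorem four_le_of_properlyConnected (hc : ProperlyConnected (completeBipartiteGraph α β) c)
    (hα : 5 ≤ Nat.card α) :
    4 ≤ numRecolored (completeBipartiteGraph α β) c +
      numNewColors (completeBipartiteGraph α β) c := by
  have hqp : numNewColors (completeBipartiteGraph α β) c ≤
      numRecolored (completeBipartiteGraph α β) c := numNewColors_le_numRecolored
  by_cases hq : numNewColors (completeBipartiteGraph α β) c ≤ 1
  · have := card_le_numRecolored_add_one hc hq
    omega
  · omega

theorem five_le_of_properlyConnected (hc : ProperlyConnected (completeBipartiteGraph α β) c)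
    (hα : 5 ≤ Nat.card α) (hβ : 4 ≤ Nat.card β) :
    5 ≤ numRecolored (completeBipartiteGraph α β) c +
      numNewColors (completeBipartiteGraph α β) c := by
  have hpq : 0 < numRecolored (completeBipartiteGraph α β) c →
      0 < numNewColors (completeBipartiteGraph α β) c := numNewColors_pos
  have hp := three_le_numRecolored hc (by omega) hβ
  by_cases hq : numNewColors (completeBipartiteGraph α β) c ≤ 1
  · have := card_le_numRecolored_add_one hc hq
    omega
  · omega

end

section

variable {α β : Type*}

def bipartiteColoring (f : α → β → ℕ) : Sym2 (α ⊕ β) → ℕ :=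
  Sym2.lift ⟨fun x y ↦ Sum.elim (fun i ↦ Sum.elim (fun _ ↦ 0) (f i) y)
    (fun j ↦ Sum.elim (fun i ↦ f i j) (fun _ ↦ 0) y) x, by rintro (_ | _) (_ | _) <;> rfl⟩

@[simp]
theorem bipartiteColoring_inl_inr (f : α → β → ℕ) (i : α) (j : β) :
    bipartiteColoring f s(.inl i, .inr j) = f i j :=
  rfl

@[simp]
theorem bipartiteColoring_inr_inl (f : α → β → ℕ) (i : α) (j : β) :
    bipartiteColoring f s(.inr j, .inl i) = f i j :=
  rfl

theorem properlyConnected_completeBipartiteGraph {c : Sym2 (α ⊕ β) → ℕ}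
    (hl : ∀ i i' : α, i ≠ i' → ∃ p : (completeBipartiteGraph α β).Walk (.inl i) (.inl i'),
      p.IsPath ∧ ProperWalk c p)
    (hr : ∀ j j' : β, j ≠ j' → ∃ p : (completeBipartiteGraph α β).Walk (.inr j) (.inr j'),
      p.IsPath ∧ ProperWalk c p) :
    ProperlyConnected (completeBipartiteGraph α β) c := by
  rintro (i | j) (i' | j') h
  · exact hl i i' (by rintro rfl; exact h rfl)
  · exact exists_properPath_of_adj c (by simp)
  · exact exists_properPath_of_adj c (by simp)
  · exact hr j j' (by rintro rfl; exact h rfl)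

/-- Colour the edges from `a` by an injective `g` with exactly two nonzero values. -/
theorem exists_properlyConnected_numRecolored_add_numNewColors_eq_four [DecidableEq α] (a : α)
    {g : β → ℕ} (hg : Function.Injective g) (h2 : {j | g j ≠ 0}.ncard = 2) :
    ∃ c, ProperlyConnected (completeBipartiteGraph α β) c ∧
      numRecolored (completeBipartiteGraph α β) c +
        numNewColors (completeBipartiteGraph α β) c = 4 := by
  obtain ⟨b₁, b₂, hb, hb₁₂⟩ := Set.ncard_eq_two.1 h2
  have hb₁ : g b₁ ≠ 0 := by simpa using hb₁₂.ge (Set.mem_insert b₁ {b₂})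
  have hb₂ : g b₂ ≠ 0 := by simpa using hb₁₂.ge (Set.mem_insert_of_mem b₁ rfl)
  set f : α → β → ℕ := fun i j ↦ if i = a then g j else 0 with hf
  have hP : recoloredPairs (bipartiteColoring f) = {a} ×ˢ {j | g j ≠ 0} := by
    ext ⟨i, j⟩
    by_cases hi : i = a <;> simp [recoloredPairs, hf, hi]
  refine ⟨bipartiteColoring f, properlyConnected_completeBipartiteGraph ?_ ?_, ?_⟩
  · intro i i' hii'
    refine exists_properPath_through_hub _ (h := .inl a) (s₁ := .inr b₁) (s₂ := .inr b₂)
      (by simpa using hb) (by simp [mem_commonNeighbors]) (by simp [mem_commonNeighbors])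
      (by simp [mem_commonNeighbors]) (by simpa using hii') (by simpa [hf] using hg.ne hb) ?_ ?_
    all_goals
      rintro (i'' | j) hx hne
      · simp_all [eq_comm (a := 0)]
      · simp [mem_commonNeighbors] at hx
  · intro j j' hjj'
    exact exists_properPath_of_adj_of_adj _ (x := .inl a) (by simp) (by simp)
      (by simpa using hjj') (by simpa [hf] using hg.ne hjj')
  · rw [numRecolored_completeBipartiteGraph, numNewColors_completeBipartiteGraph, hP,
      Set.ncard_prod, Set.ncard_singleton, h2]
    have himage : (fun p : α × β ↦ bipartiteColoring f s(.inl p.1, .inr p.2)) ''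
        ({a} ×ˢ {j | g j ≠ 0}) = g '' {j | g j ≠ 0} := by
      ext; simp [hf]
    rw [himage, Set.ncard_image_of_injective _ hg, h2]

/-- Colour `s(a₀, b₀)` with `1` and `s(a₀, b₁)`, `s(a₁, b₀)` with `2`. -/
theorem exists_properlyConnected_numRecolored_add_numNewColors_eq_five
    [DecidableEq α] [DecidableEq β] {a₀ a₁ : α} {b₀ b₁ : β} (ha : a₀ ≠ a₁) (hb : b₀ ≠ b₁) :
    ∃ c, ProperlyConnected (completeBipartiteGraph α β) c ∧
      numRecolored (completeBipartiteGraph α β) c +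
        numNewColors (completeBipartiteGraph α β) c = 5 := by
  set f : α → β → ℕ := fun i j ↦
    if i = a₀ ∧ j = b₀ then 1 else if i = a₀ ∧ j = b₁ ∨ i = a₁ ∧ j = b₀ then 2 else 0 with hf
  have hP : recoloredPairs (bipartiteColoring f) = {(a₀, b₀), (a₀, b₁), (a₁, b₀)} := by
    ext ⟨i, j⟩
    simp only [recoloredPairs, bipartiteColoring_inl_inr, hf, Set.mem_ofPred_eq,
      Set.mem_insert_iff, Set.mem_singleton_iff, Prod.mk.injEq]
    split_ifs <;> tauto
  refine ⟨bipartiteColoring f, properlyConnected_completeBipartiteGraph ?_ ?_, ?_⟩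
  · intro i i' hii'
    refine exists_properPath_through_hub _ (h := .inl a₀) (s₁ := .inr b₀) (s₂ := .inr b₁)
      (by simpa using hb) (by simp [mem_commonNeighbors]) (by simp [mem_commonNeighbors])
      (by simp [mem_commonNeighbors]) (by simpa using hii') (by simp [hf, hb.symm]) ?_ ?_
    all_goals
      rintro (i'' | j) hx hne
      · simp at hne
        simp [hf, hne, hb.symm] <;> split_ifs <;> simp
      · simp [mem_commonNeighbors] at hx
  · intro j j' hjj'
    refine exists_properPath_through_hub _ (h := .inr b₀) (s₁ := .inl a₀) (s₂ := .inl a₁)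
      (by simpa using ha) (by simp [mem_commonNeighbors]) (by simp [mem_commonNeighbors])
      (by simp [mem_commonNeighbors]) (by simpa using hjj') (by simp [hf, ha.symm]) ?_ ?_
    all_goals
      rintro (i | j'') hx hne
      · simp [mem_commonNeighbors] at hx
      · simp at hne
        simp [hf, hne, ha.symm] <;> split_ifs <;> simp
  · have hpair : ((fun p : α × β ↦ bipartiteColoring f s(.inl p.1, .inr p.2)) ''
        {(a₀, b₀), (a₀, b₁), (a₁, b₀)}) = {1, 2} := by
      simp [Set.image_insert_eq, hf, ha.symm, hb.symm, ha, hb]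
    rw [numRecolored_completeBipartiteGraph, numNewColors_completeBipartiteGraph, hP, hpair,
      Set.ncard_insert_of_notMem (by simp [ha, hb]), Set.ncard_pair (by simp [ha]),
      Set.ncard_pair (by norm_num)]

end

end SimpleGraph

theorem Fin.exists_injective_ncard_ne_zero_eq_two {n : ℕ} (hn : 2 ≤ n) (hn3 : n ≤ 3) :
    ∃ g : Fin n → ℕ, Function.Injective g ∧ {j | g j ≠ 0}.ncard = 2 := by
  refine ⟨fun j ↦ (j.val + 1) % 3, fun j j' h ↦ Fin.ext (by simp at h; omega), ?_⟩
  have : {j : Fin n | (j.val + 1) % 3 ≠ 0} = {⟨0, by omega⟩, ⟨1, by omega⟩} := by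
    ext j
    simp [Fin.ext_iff]
    omega
  rw [this, Set.ncard_pair (by simp)]

theorem stmt9 (m n : ℕ) (hmn : n ≤ m) (hn : 2 ≤ n) (h9 : 9 ≤ m + n) :
    (n ≤ 3 → pcOpt (completeBipartiteGraph (Fin m) (Fin n)) = 4) ∧
    (4 ≤ n → pcOpt (completeBipartiteGraph (Fin m) (Fin n)) = 5) := by
  have hm : 5 ≤ Nat.card (Fin m) := by rw [Nat.card_fin]; omega
  refine ⟨fun hn3 ↦ ?_, fun hn4 ↦ ?_⟩
  · obtain ⟨g, hg, hg2⟩ := Fin.exists_injective_ncard_ne_zero_eq_two hn hn3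
    obtain ⟨c, hc, hk⟩ := exists_properlyConnected_numRecolored_add_numNewColors_eq_four
      (⟨0, by omega⟩ : Fin m) hg hg2
    exact pcOpt_eq_of_forall_le hc hk fun c' hc' ↦ four_le_of_properlyConnected hc' hm
  · obtain ⟨c, hc, hk⟩ := exists_properlyConnected_numRecolored_add_numNewColors_eq_five
      (a₀ := (⟨0, by omega⟩ : Fin m)) (a₁ := ⟨1, by omega⟩) (b₀ := (⟨0, by omega⟩ : Fin n))
      (b₁ := ⟨1, by omega⟩) (by simp) (by simp)
    exact pcOpt_eq_of_forall_le hc hk fun c' hc' ↦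
      five_le_of_properlyConnected hc' hm (by rwa [Nat.card_fin])
end

section
/- Every tree T on n ≥ 3 vertices has a maximum matching M such that every vertex of maximum degree Δ(T) is covered by M. -/
open SimpleGraph

/-- Maximum matching size. -/
noncomputable def matchingNum {V : Type*} (G : SimpleGraph V) : ℕ :=
  sSup { n | ∃ M : SimpleGraph.Subgraph G, M.IsMatching ∧ n = M.edgeSet.ncard }

/-- Maximum degree. -/
noncomputable def maxDeg {V : Type*} (G : SimpleGraph V) : ℕ :=
  sSup { d | ∃ v : V, d = (G.neighborSet v).ncard }

/-! Take a maximum matching that covers as many vertices of degree at least two as possible, and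
suppose it misses such a vertex `x`. Some neighbour `u` of `x` is covered, by `w` say, since
otherwise `xu` would augment the matching; trading `uw` for `xu` keeps the matching maximum and
moves the uncovered vertex from `x` to `w`. If `w` again has degree at least two, repeat from `w`
along a neighbour other than the one we came from. In a forest the walk `x, u, w, …` is a path,
so the process stops, with a maximum matching covering strictly more vertices of degree at least
two. In a tree on at least three vertices the maximum degree is at least two. -/

namespace SimpleGraph

variable {V : Type*} {G : SimpleGraph V}

lemma IsAcyclic.isPath_concat_of_ne_penultimate (hG : G.IsAcyclic) {v x u : V}
    {q : G.Walk v x} (hq : q.IsPath) (hxu : G.Adj x u) (hu : u ≠ q.penultimate) :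
    (q.concat hxu).IsPath :=
  hq.concat (fun hmem ↦ hu (hG.eq_penultimate_of_adj_end hq hxu hmem)) hxu

def Subgraph.IsMaximumMatching (M : G.Subgraph) : Prop :=
  M.IsMatching ∧ M.edgeSet.ncard = matchingNum G

lemma Subgraph.IsMatching.ncard_verts_eq_two_mul [Finite V] {M : G.Subgraph}
    (hM : M.IsMatching) : M.verts.ncard = 2 * M.edgeSet.ncard := by
  classical
  have := Fintype.ofFinite V
  have hdeg : ∀ v : M.verts, M.coe.degree v = 1 := fun v ↦ by
    rw [coe_degree]; convert (isMatching_iff_forall_degree.mp hM) v v.2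
  have hedges : M.edgeSet.ncard = M.coe.edgeFinset.card := by
    rw [← image_coe_edgeSet_coe, Set.ncard_image_of_injective _
      (Sym2.map.injective Subtype.val_injective), ← Set.ncard_coe_finset, coe_edgeFinset]
  rw [hedges, ← M.coe.sum_degrees_eq_twice_card_edges]
  calc M.verts.ncard = ∑ _v : M.verts, 1 := by simp [Set.ncard_eq_toFinset_card']
    _ = _ := Finset.sum_congr rfl fun v _ ↦ by convert (hdeg v).symm

lemma Subgraph.IsMatching.deleteVerts_pair {M : G.Subgraph} (hM : M.IsMatching) {u w : V}
    (huw : M.Adj u w) : (M.deleteVerts {u, w}).IsMatching := by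
  rintro v ⟨hv, hvuw⟩
  obtain ⟨v', hvv', huniq⟩ := hM hv
  have hv' : v' ∉ ({u, w} : Set V) := by
    rintro (rfl | rfl)
    · exact hvuw (.inr (hM.eq_of_adj_left huw hvv'.symm).symm)
    · exact hvuw (.inl (hM.eq_of_adj_right huw hvv').symm)
  exact ⟨v', deleteVerts_adj.mpr ⟨hv, hvuw, hvv'.snd_mem, hv', hvv'⟩,
    fun y hy ↦ huniq y (deleteVerts_adj.mp hy).2.2.2.2⟩

section Finite

variable [Finite V]

private lemma bddAbove_matchingSizes :
    BddAbove {n | ∃ M : G.Subgraph, M.IsMatching ∧ n = M.edgeSet.ncard} := by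
  refine ((Set.finite_range fun M : G.Subgraph ↦ M.edgeSet.ncard).subset ?_).bddAbove
  rintro _ ⟨M, -, rfl⟩
  exact ⟨M, rfl⟩

lemma exists_isMaximumMatching : ∃ M : G.Subgraph, M.IsMaximumMatching := by
  obtain ⟨M, hM, hcard⟩ := Nat.sSup_mem (s := {n | ∃ M : G.Subgraph, M.IsMatching ∧ n = _})
    ⟨0, ⊥, fun _ hv ↦ by simp at hv, by simp⟩ bddAbove_matchingSizes
  exact ⟨M, hM, hcard.symm⟩

lemma Subgraph.IsMatching.ncard_edgeSet_le_matchingNum {M : G.Subgraph} (hM : M.IsMatching) :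
    M.edgeSet.ncard ≤ matchingNum G :=
  le_csSup bddAbove_matchingSizes ⟨M, hM, rfl⟩

lemma Subgraph.IsMaximumMatching.mem_verts_or_mem_verts_of_adj {M : G.Subgraph}
    (hM : M.IsMaximumMatching) {x u : V} (hxu : G.Adj x u) : x ∈ M.verts ∨ u ∈ M.verts := by
  by_contra! h
  have hdisj : Disjoint M.support (G.subgraphOfAdj hxu).support := by
    refine Set.disjoint_of_subset_left M.support_subset_verts <|
      Set.disjoint_of_subset_right (subgraphOfAdj _ _).support_subset_verts ?_
    simp [h.1, h.2]
  have hM' := hM.1.sup (.subgraphOfAdj hxu) hdisj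
  have hverts : (M ⊔ G.subgraphOfAdj hxu).verts.ncard = M.verts.ncard + 2 := by
    rw [verts_sup, subgraphOfAdj_verts, Set.union_insert, Set.union_singleton,
      Set.ncard_insert_of_notMem, Set.ncard_insert_of_notMem h.2]
    simp [h.1, hxu.ne]
  have h := hM'.ncard_verts_eq_two_mul
  rw [hverts, hM.1.ncard_verts_eq_two_mul, hM.2] at h
  have := hM'.ncard_edgeSet_le_matchingNum
  omega

lemma Subgraph.IsMaximumMatching.exists_verts_eq_insert_diff {M : G.Subgraph}
    (hM : M.IsMaximumMatching) {x u w : V} (hxu : G.Adj x u) (hx : x ∉ M.verts)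
    (huw : M.Adj u w) :
    ∃ M' : G.Subgraph, M'.IsMaximumMatching ∧ M'.verts = insert x (M.verts \ {w}) := by
  have hdisj : Disjoint (M.deleteVerts {u, w}).support (G.subgraphOfAdj hxu).support := by
    refine Set.disjoint_of_subset_left (support_subset_verts _) <|
      Set.disjoint_of_subset_right (subgraphOfAdj _ _).support_subset_verts ?_
    rw [deleteVerts_verts, subgraphOfAdj_verts]
    grind
  have hM' := (hM.1.deleteVerts_pair huw).sup (.subgraphOfAdj hxu) hdisj
  have hverts :
      (M.deleteVerts {u, w} ⊔ G.subgraphOfAdj hxu).verts = insert x (M.verts \ {w}) := by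
    rw [verts_sup, deleteVerts_verts, subgraphOfAdj_verts]
    have := huw.fst_mem
    have := huw.ne
    grind
  refine ⟨_, ⟨hM', ?_⟩, hverts⟩
  have hcard : (insert x (M.verts \ {w})).ncard = M.verts.ncard := by
    rw [Set.ncard_insert_of_notMem (fun h ↦ hx h.1),
      Set.ncard_sdiff_singleton_add_one huw.snd_mem]
  have h := hM'.ncard_verts_eq_two_mul
  rw [hverts, hcard, hM.1.ncard_verts_eq_two_mul, hM.2] at h
  omega

lemma IsAcyclic.exists_isMaximumMatching_verts_eq_insert_diff_of_isPath (hG : G.IsAcyclic)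
    {M : G.Subgraph} (hM : M.IsMaximumMatching) {v x : V} {q : G.Walk v x} (hq : q.IsPath)
    (hx : x ∉ M.verts) (hdeg : 1 < (G.neighborSet x).ncard) :
    ∃ (w : V) (q' : G.Walk v w) (M' : G.Subgraph), q'.IsPath ∧ q.length < q'.length ∧
      M'.IsMaximumMatching ∧ M'.verts = insert x (M.verts \ {w}) ∧ w ≠ x := by
  obtain ⟨u, hxu, hu⟩ : ∃ u, G.Adj x u ∧ u ≠ q.penultimate := by
    obtain ⟨a, b, ha, hb, hab⟩ := (Set.one_lt_ncard_iff).mp hdeg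
    by_cases hapen : a = q.penultimate
    · exact ⟨b, hb, hapen ▸ hab.symm⟩
    · exact ⟨a, ha, hapen⟩
  have hqu := hG.isPath_concat_of_ne_penultimate hq hxu hu
  obtain ⟨w, huw, -⟩ := hM.1 ((hM.mem_verts_or_mem_verts_of_adj hxu).resolve_left hx)
  have hwx : w ≠ x := fun h ↦ hx (h ▸ huw.snd_mem)
  have hqw := hG.isPath_concat_of_ne_penultimate hqu (M.adj_sub huw)
    (by rwa [Walk.penultimate_concat])
  obtain ⟨M', hM', hverts⟩ := hM.exists_verts_eq_insert_diff hxu hx huw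
  exact ⟨w, _, M', hqw, by simp, hM', hverts, hwx⟩

theorem IsAcyclic.exists_isMaximumMatching_insert_subset (hG : G.IsAcyclic) {M : G.Subgraph}
    (hM : M.IsMaximumMatching) {v x : V} {q : G.Walk v x} (hq : q.IsPath) (hx : x ∉ M.verts)
    (hdeg : 1 < (G.neighborSet x).ncard) :
    ∃ M' : G.Subgraph, M'.IsMaximumMatching ∧
      insert x ({y | 1 < (G.neighborSet y).ncard} ∩ M.verts) ⊆ M'.verts := by
  obtain ⟨w, q', M₁, hq', hlen, hM₁, hverts, hwx⟩ :=
    hG.exists_isMaximumMatching_verts_eq_insert_diff_of_isPath hM hq hx hdeg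
  by_cases hw : 1 < (G.neighborSet w).ncard
  · have hwM₁ : w ∉ M₁.verts := by simp [hverts, hwx]
    obtain ⟨M', hM', hsub⟩ := hG.exists_isMaximumMatching_insert_subset hM₁ hq' hwM₁ hw
    exact ⟨M', hM', by grind⟩
  · exact ⟨M₁, hM₁, by grind⟩
termination_by Nat.card V - q.length
decreasing_by
  have := Fintype.ofFinite V
  have := hq'.length_lt
  rw [Nat.card_eq_fintype_card]
  omega

theorem IsAcyclic.exists_isMaximumMatching_forall_one_lt_ncard_neighborSet
    (hG : G.IsAcyclic) : ∃ M : G.Subgraph, M.IsMaximumMatching ∧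
      ∀ v, 1 < (G.neighborSet v).ncard → v ∈ M.verts := by
  set S := {y | 1 < (G.neighborSet y).ncard}
  obtain ⟨M, hM, hmax⟩ := Set.exists_max_image {M : G.Subgraph | M.IsMaximumMatching}
    (fun M ↦ (S ∩ M.verts).ncard) (Set.toFinite _) exists_isMaximumMatching
  refine ⟨M, hM, fun v hv ↦ by_contra fun hvM ↦ ?_⟩
  obtain ⟨M', hM', hsub⟩ := hG.exists_isMaximumMatching_insert_subset hM Walk.IsPath.nil hvM hv
  have hssub : S ∩ M.verts ⊂ S ∩ M'.verts :=
    (Set.ssubset_iff_of_subset <|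
      Set.subset_inter Set.inter_subset_left ((Set.subset_insert _ _).trans hsub)).mpr
      ⟨v, ⟨hv, hsub (.inl rfl)⟩, fun h ↦ hvM h.2⟩
  exact (hmax M' hM').not_gt (Set.ncard_lt_ncard hssub)

lemma ncard_neighborSet_le_maxDeg (v : V) : (G.neighborSet v).ncard ≤ maxDeg G :=
  le_csSup ⟨Nat.card V, by rintro _ ⟨w, rfl⟩; exact Set.ncard_le_card _⟩ ⟨v, rfl⟩

end Finite

lemma IsTree.exists_one_lt_ncard_neighborSet [Fintype V] (hG : G.IsTree)
    (hn : 3 ≤ Fintype.card V) : ∃ v, 1 < (G.neighborSet v).ncard := by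
  classical
  by_contra! h
  have hdeg : ∀ v, G.degree v ≤ 1 := fun v ↦ by
    rw [← card_neighborSet_eq_degree, ← Nat.card_eq_fintype_card, Nat.card_coe_set_eq]
    exact h v
  have hsum : ∑ v, G.degree v ≤ Fintype.card V := by
    simpa using Finset.sum_le_sum fun v (_ : v ∈ Finset.univ) ↦ hdeg v
  have := hG.card_edgeFinset
  have := G.sum_degrees_eq_twice_card_edges
  omega

end SimpleGraph

theorem stmt13 {V : Type*} [Fintype V] (T : SimpleGraph V) (hT : T.IsTree)
    (hn : 3 ≤ Fintype.card V) :
    ∃ M : SimpleGraph.Subgraph T, M.IsMatching ∧ M.edgeSet.ncard = matchingNum T ∧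
      ∀ v : V, (T.neighborSet v).ncard = maxDeg T → v ∈ M.verts := by
  obtain ⟨M, ⟨hM, hmax⟩, hcover⟩ :=
    hT.isAcyclic.exists_isMaximumMatching_forall_one_lt_ncard_neighborSet
  obtain ⟨w, hw⟩ := hT.exists_one_lt_ncard_neighborSet hn
  exact ⟨M, hM, hmax, fun v hv ↦
    hcover v (hv ▸ hw.trans_le (SimpleGraph.ncard_neighborSet_le_maxDeg w))⟩
end
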